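/- arXiv:2605.21873 — 2 statements merged into one kernel-verified Lean document; each statement's English description precedes it below -/
import Mathlib

section
/- For every a > 0 and every λ ∈ ℝ, the Fourier transform of the Fejér kernel satisfies ∫_ℝ e^{i t λ} F_a(t) dt = 1 - |λ|/a if |λ| ≤ a, and ∫_ℝ e^{i t λ} F_a(t) dt = 0 if |λ| > a. -/
open Real MeasureTheory Complex
open scoped FourierTransform

/-- The Fejér kernel `F_a : ℝ → ℝ`. -/
noncomputable def fejerKernel (a : ℝ) (t : ℝ) : ℝ :=
  if t = 0 then a / (2 * Real.pi) else (1 - Real.cos (a * t)) / (Real.pi * a * t ^ 2)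


/-- Triangle function. -/
noncomputable def triFn (a : ℝ) (x : ℝ) : ℝ := max 0 (1 - |x| / a)

lemma triFn_continuous (a : ℝ) : Continuous (triFn a) :=
  continuous_const.max (continuous_const.sub (continuous_abs.div_const a))

lemma triFn_eq_zero {a x : ℝ} (ha : 0 < a) (hx : a ≤ |x|) : triFn a x = 0 := by
  have : 1 - |x| / a ≤ 0 := by
    rw [sub_nonpos, le_div_iff₀ ha]
    linarith
  exact max_eq_left this

lemma triFn_hasCompactSupport (a : ℝ) (ha : 0 < a) : HasCompactSupport (triFn a) := by
  apply HasCompactSupport.intro (isCompact_Icc (a := -a) (b := a))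
  intro x hx
  apply triFn_eq_zero ha
  by_contra h
  push_neg at h
  exact hx (Set.mem_Icc.mpr (abs_le.mp h.le))

lemma triFn_even (a : ℝ) (x : ℝ) : triFn a (-x) = triFn a x := by
  simp [triFn, abs_neg]

/-- Antiderivative computation. -/
lemma hasDerivAt_aux (a b : ℝ) (ha : a ≠ 0) (hb : b ≠ 0) (x : ℝ) :
    HasDerivAt (fun x : ℝ => (1 - x / a) * Real.sin (b * x) / b - Real.cos (b * x) / (a * b ^ 2))
      ((1 - x / a) * Real.cos (b * x)) x := by
  have h0 : HasDerivAt (fun x : ℝ => b * x) (b * 1) x := (hasDerivAt_id x).const_mul b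
  have h1 : HasDerivAt (fun x : ℝ => 1 - x / a) (0 - 1 / a) x :=
    (hasDerivAt_const x (1:ℝ)).sub ((hasDerivAt_id x).div_const a)
  have h2 : HasDerivAt (fun x : ℝ => Real.sin (b * x)) (Real.cos (b * x) * (b * 1)) x :=
    (Real.hasDerivAt_sin (b * x)).comp x h0
  have h3 : HasDerivAt (fun x : ℝ => Real.cos (b * x)) (-Real.sin (b * x) * (b * 1)) x :=
    (Real.hasDerivAt_cos (b * x)).comp x h0
  have := ((h1.mul h2).div_const b).sub (h3.div_const (a * b ^ 2))
  refine this.congr_deriv ?_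
  field_simp
  ring

lemma integral_tri_cos (a b : ℝ) (ha : 0 < a) (hb : b ≠ 0) :
    ∫ x in (0:ℝ)..a, (1 - x / a) * Real.cos (b * x) = (1 - Real.cos (b * a)) / (a * b ^ 2) := by
  rw [intervalIntegral.integral_eq_sub_of_hasDerivAt
    (fun x _ => hasDerivAt_aux a b ha.ne' hb x)
    (by apply Continuous.intervalIntegrable; continuity)]
  simp [Real.sin_zero, Real.cos_zero, div_self ha.ne']
  field_simp
  ring

lemma integral_tri_one (a : ℝ) (ha : 0 < a) :
    ∫ x in (0:ℝ)..a, (1 - x / a) = a / 2 := by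
  rw [intervalIntegral.integral_sub intervalIntegrable_const
    (by apply Continuous.intervalIntegrable; continuity)]
  simp [intervalIntegral.integral_div, integral_id]
  field_simp
  ring
noncomputable def ftri (a : ℝ) (t : ℝ) : ℝ :=
  if t = 0 then a else 2 * ((1 - Real.cos (2 * π * t * a)) / (a * (2 * π * t) ^ 2))

lemma support_mul_tri (a : ℝ) (ha : 0 < a) (g : ℝ → ℝ) :
    Function.support (fun v => g v * triFn a v) ⊆ Set.Ioc (-a) a := by
  intro x hx
  simp only [Function.mem_support, ne_eq] at hx
  by_contra h
  have hax : a ≤ |x| := by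
    simp only [Set.mem_Ioc, not_and_or, not_lt, not_le] at h
    rcases h with h | h
    · rw [abs_of_nonpos (by linarith)]; linarith
    · rw [abs_of_pos (by linarith)]; linarith
  exact hx (by rw [triFn_eq_zero ha hax, mul_zero])

lemma integral_sin_tri (a t : ℝ) (ha : 0 < a) :
    ∫ v : ℝ, Real.sin (2 * π * t * v) * triFn a v = 0 := by
  set f : ℝ → ℝ := fun v => Real.sin (2 * π * t * v) * triFn a v with hf
  have hc : Continuous f := ((Real.continuous_sin.comp (continuous_const.mul continuous_id)).mul
    (triFn_continuous a))
  rw [← intervalIntegral.integral_eq_integral_of_support_subset (support_mul_tri a ha _)]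
  rw [← intervalIntegral.integral_add_adjacent_intervals (b := 0)
    (hc.intervalIntegrable _ _) (hc.intervalIntegrable _ _)]
  have h1 : (∫ x in (0:ℝ)..a, f (-x)) = ∫ x in (-a)..(0:ℝ), f x := by
    rw [intervalIntegral.integral_comp_neg]; norm_num
  have h2 : (∫ x in (0:ℝ)..a, f (-x)) = - ∫ x in (0:ℝ)..a, f x := by
    rw [← intervalIntegral.integral_neg]
    apply intervalIntegral.integral_congr
    intro x _
    simp only [f, triFn_even, mul_neg, Real.sin_neg, neg_mul]
  rw [← h1, h2]
  ring

lemma integral_cos_tri (a t : ℝ) (ha : 0 < a) :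
    ∫ v : ℝ, Real.cos (2 * π * t * v) * triFn a v = ftri a t := by
  set f : ℝ → ℝ := fun v => Real.cos (2 * π * t * v) * triFn a v with hf
  have hc : Continuous f := ((Real.continuous_cos.comp (continuous_const.mul continuous_id)).mul
    (triFn_continuous a))
  rw [← intervalIntegral.integral_eq_integral_of_support_subset (support_mul_tri a ha _)]
  rw [← intervalIntegral.integral_add_adjacent_intervals (b := 0)
    (hc.intervalIntegrable _ _) (hc.intervalIntegrable _ _)]
  have h1 : (∫ x in (0:ℝ)..a, f (-x)) = ∫ x in (-a)..(0:ℝ), f x := by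
    rw [intervalIntegral.integral_comp_neg]; norm_num
  have h2 : (∫ x in (0:ℝ)..a, f (-x)) = ∫ x in (0:ℝ)..a, f x := by
    apply intervalIntegral.integral_congr
    intro x _
    simp only [f, triFn_even, mul_neg, Real.cos_neg]
  have h3 : (∫ x in (0:ℝ)..a, f x) = ∫ x in (0:ℝ)..a, (1 - x / a) * Real.cos (2 * π * t * x) := by
    apply intervalIntegral.integral_congr
    intro x hx
    rw [Set.uIcc_of_le ha.le] at hx
    have hx0 : 0 ≤ x := hx.1
    have hxa : x ≤ a := hx.2
    simp only [f, triFn, _root_.abs_of_nonneg hx0]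
    rw [max_eq_right (by rw [sub_nonneg, div_le_one ha]; exact hxa)]
    ring
  rw [← h1, h2, h3]
  by_cases ht : t = 0
  · simp only [ht, mul_zero, zero_mul, Real.cos_zero, mul_one, ftri, if_pos]
    rw [integral_tri_one a ha]
    ring
  · have hb : 2 * π * t ≠ 0 := by
      have := Real.pi_ne_zero
      positivity
    rw [integral_tri_cos a (2 * π * t) ha hb]
    rw [ftri, if_neg ht]
    ring
lemma integrable_mul_tri (a : ℝ) (ha : 0 < a) {g : ℝ → ℝ} (hg : Continuous g) :
    Integrable (fun v => g v * triFn a v) := by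
  apply Continuous.integrable_of_hasCompactSupport (hg.mul (triFn_continuous a))
  exact HasCompactSupport.mul_left (triFn_hasCompactSupport a ha)

lemma fourier_tri (a : ℝ) (ha : 0 < a) (t : ℝ) :
    𝓕 (fun x : ℝ => ((triFn a x : ℝ) : ℂ)) t = ((ftri a t : ℝ) : ℂ) := by
  rw [Real.fourier_real_eq_integral_exp_smul]
  have key : (fun v : ℝ => Complex.exp (↑(-2 * π * v * t) * Complex.I) • ((triFn a v : ℝ) : ℂ))
      = fun v : ℝ => (((Real.cos (2 * π * t * v) * triFn a v : ℝ)) : ℂ)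
        - (((Real.sin (2 * π * t * v) * triFn a v : ℝ)) : ℂ) * Complex.I := by
    funext v
    have harg : ((-2 * π * v * t : ℝ) : ℂ) = -(((2 * π * t * v : ℝ) : ℂ)) := by
      push_cast; ring
    rw [smul_eq_mul, harg, Complex.exp_mul_I, Complex.cos_neg, Complex.sin_neg,
      ← Complex.ofReal_cos, ← Complex.ofReal_sin]
    push_cast
    ring
  rw [key]
  have hint1 : Integrable (fun v : ℝ => (((Real.cos (2 * π * t * v) * triFn a v : ℝ)) : ℂ)) :=
    (integrable_mul_tri a ha (Real.continuous_cos.comp (continuous_const.mul continuous_id))).ofReal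
  have hint2 : Integrable (fun v : ℝ => (((Real.sin (2 * π * t * v) * triFn a v : ℝ)) : ℂ)) :=
    (integrable_mul_tri a ha (Real.continuous_sin.comp (continuous_const.mul continuous_id))).ofReal
  rw [integral_sub hint1 (hint2.mul_const Complex.I), integral_mul_const]
  have hre : ∀ g : ℝ → ℝ, (∫ v : ℝ, ((g v : ℝ) : ℂ)) = ((∫ v : ℝ, g v : ℝ) : ℂ) := by
    intro g
    exact integral_ofReal
  rw [hre, hre, integral_sin_tri a t ha, integral_cos_tri a t ha]
  simp
lemma ftri_nonneg (a t : ℝ) (ha : 0 < a) : 0 ≤ ftri a t := by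
  rw [ftri]
  split_ifs with ht
  · exact ha.le
  · have h1 : Real.cos (2 * π * t * a) ≤ 1 := Real.cos_le_one _
    have h2 : (0:ℝ) ≤ a * (2 * π * t) ^ 2 := by positivity
    exact mul_nonneg (by norm_num) (div_nonneg (by linarith) h2)

lemma ftri_le (a t : ℝ) (ha : 0 < a) :
    ftri a t ≤ (a + 1 / (π ^ 2 * a)) * (1 + t ^ 2)⁻¹ := by
  have hπ : (0:ℝ) < π := Real.pi_pos
  have hc1 : 1 - (2 * π * t * a) ^ 2 / 2 ≤ Real.cos (2 * π * t * a) :=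
    Real.one_sub_sq_div_two_le_cos
  have hc2 : -1 ≤ Real.cos (2 * π * t * a) := Real.neg_one_le_cos _
  rw [ftri]
  split_ifs with ht
  · simp only [ht]
    rw [show (1:ℝ) + 0 ^ 2 = 1 by norm_num, inv_one, mul_one]
    have h : (0:ℝ) < 1 / (π ^ 2 * a) := by positivity
    linarith
  · have h2pt : 2 * π * t ≠ 0 := mul_ne_zero (mul_ne_zero two_ne_zero Real.pi_ne_zero) ht
    have hsq : (0:ℝ) < (2 * π * t) ^ 2 :=
      lt_of_le_of_ne (sq_nonneg _) (Ne.symm (pow_ne_zero 2 h2pt))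
    have hD : (0:ℝ) < a * (2 * π * t) ^ 2 := mul_pos ha hsq
    have hKD : (a + 1 / (π ^ 2 * a)) * (a * (2 * π * t) ^ 2)
        = 4 * π ^ 2 * a ^ 2 * t ^ 2 + 4 * t ^ 2 := by
      field_simp
      ring
    have hmid : 2 * ((1 - Real.cos (2 * π * t * a)) / (a * (2 * π * t) ^ 2))
        = (2 * (1 - Real.cos (2 * π * t * a))) / (a * (2 * π * t) ^ 2) := by ring
    rw [hmid, show (a + 1 / (π ^ 2 * a)) * (1 + t ^ 2)⁻¹
        = (a + 1 / (π ^ 2 * a)) / (1 + t ^ 2) from (div_eq_mul_inv _ _).symm,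
      div_le_div_iff₀ hD (by positivity)]
    nlinarith [mul_le_mul_of_nonneg_right
      (show 1 - Real.cos (2 * π * t * a) ≤ 2 by linarith) (sq_nonneg t)]

lemma integrable_ftri_complex (a : ℝ) (ha : 0 < a) :
    Integrable (fun t : ℝ => ((ftri a t : ℝ) : ℂ)) := by
  have hmeas : Measurable (ftri a) := by
    apply Measurable.ite measurableSet_eq
    · exact measurable_const
    · fun_prop
  have hint : Integrable (ftri a) := by
    apply Integrable.mono' (integrable_inv_one_add_sq.const_mul (a + 1 / (π ^ 2 * a)))
      hmeas.aestronglyMeasurable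
    filter_upwards with t
    rw [Real.norm_eq_abs, _root_.abs_of_nonneg (ftri_nonneg a t ha)]
    exact ftri_le a t ha
  exact hint.ofReal
lemma tri_inversion (a : ℝ) (ha : 0 < a) :
    𝓕⁻ (fun t : ℝ => ((ftri a t : ℝ) : ℂ)) = fun x : ℝ => ((triFn a x : ℝ) : ℂ) := by
  have hF : 𝓕 (fun x : ℝ => ((triFn a x : ℝ) : ℂ)) = fun t : ℝ => ((ftri a t : ℝ) : ℂ) :=
    funext (fourier_tri a ha)
  rw [← hF]
  apply Continuous.fourierInv_fourier_eq
  · exact Complex.continuous_ofReal.comp (triFn_continuous a)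
  · exact ((triFn_continuous a).integrable_of_hasCompactSupport
      (triFn_hasCompactSupport a ha)).ofReal
  · rw [hF]; exact integrable_ftri_complex a ha

lemma inv_integral_eq (a : ℝ) (ha : 0 < a) (lam : ℝ) :
    (∫ x : ℝ, Complex.exp (((2 * π * x * lam : ℝ) : ℂ) * Complex.I) * ((ftri a x : ℝ) : ℂ))
      = ((triFn a lam : ℝ) : ℂ) := by
  have h := congrFun (tri_inversion a ha) lam
  rw [Real.fourierInv_eq_fourier_neg,
    Real.fourier_real_eq_integral_exp_smul] at h
  rw [← h]
  congr 1
  funext x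
  rw [smul_eq_mul]
  congr 2
  push_cast
  ring
lemma fejer_pointwise (a : ℝ) (ha : 0 < a) (lam : ℝ) (x : ℝ) :
    Complex.exp (Complex.I * ((2 * π * x : ℝ) : ℂ) * (lam : ℂ)) * ((fejerKernel a (2 * π * x) : ℝ) : ℂ)
      = Complex.exp (((2 * π * x * lam : ℝ) : ℂ) * Complex.I) * ((ftri a x : ℝ) : ℂ)
          * (((2 * π)⁻¹ : ℝ) : ℂ) := by
  have hπ : (0:ℝ) < π := Real.pi_pos
  by_cases hx : x = 0
  · subst hx
    simp only [mul_zero, Complex.ofReal_zero, zero_mul, Complex.exp_zero, one_mul,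
      fejerKernel, ftri, if_pos rfl, zero_mul, mul_zero]
    norm_num
    push_cast
    field_simp
  · have h2x : 2 * π * x ≠ 0 := mul_ne_zero (mul_ne_zero two_ne_zero Real.pi_ne_zero) hx
    rw [fejerKernel, if_neg h2x, ftri, if_neg hx]
    have hexp : Complex.I * ((2 * π * x : ℝ) : ℂ) * (lam : ℂ)
        = ((2 * π * x * lam : ℝ) : ℂ) * Complex.I := by push_cast; ring
    have hreal : (1 - Real.cos (a * (2 * π * x))) / (π * a * (2 * π * x) ^ 2)
        = 2 * ((1 - Real.cos (2 * π * x * a)) / (a * (2 * π * x) ^ 2)) * (2 * π)⁻¹ := by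
      rw [show a * (2 * π * x) = 2 * π * x * a by ring]
      field_simp
    rw [hexp, hreal]
    push_cast
    ring

theorem fejerKernel_fourierTransform (a : ℝ) (ha : 0 < a) (lam : ℝ) :
    (|lam| ≤ a →
      (∫ t : ℝ, Complex.exp (Complex.I * t * lam) * (fejerKernel a t : ℂ)) =
        ((1 - |lam| / a : ℝ) : ℂ)) ∧
    (a < |lam| →
      (∫ t : ℝ, Complex.exp (Complex.I * t * lam) * (fejerKernel a t : ℂ)) = 0) := by
  have hπ : (0:ℝ) < π := Real.pi_pos
  have key : (∫ t : ℝ, Complex.exp (Complex.I * t * lam) * (fejerKernel a t : ℂ))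
      = ((triFn a lam : ℝ) : ℂ) := by
    have hcomp := MeasureTheory.Measure.integral_comp_mul_left
      (fun t : ℝ => Complex.exp (Complex.I * t * lam) * (fejerKernel a t : ℂ)) (2 * π)
    simp only [fejer_pointwise a ha lam] at hcomp
    rw [integral_mul_const, inv_integral_eq a ha lam, abs_of_pos (by positivity : (0:ℝ) < (2*π)⁻¹),
      Complex.real_smul] at hcomp
    have h2 : ((((2 * π)⁻¹ : ℝ)) : ℂ) ≠ 0 := by
      simp only [ne_eq, Complex.ofReal_eq_zero]
      positivity
    apply mul_left_cancel₀ h2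
    rw [← hcomp]
    ring
  constructor
  · intro hlam
    rw [key]
    congr 1
    rw [triFn]
    exact max_eq_right (sub_nonneg.mpr ((div_le_one ha).mpr hlam))
  · intro hlam
    rw [key, triFn_eq_zero ha hlam.le]
    simp
end

section
/- Let I ⊆ ℝ be a closed interval and let s be an interior point of I. Then there exists an integrable function f : ℝ → ℂ such that ‖f‖₁ = 1, f̂(s) = 1, and the support of the Fourier transform f̂ is contained in I. -/
open Real MeasureTheory Complex

open scoped FourierTransform

/-- Auxiliary: a smooth compactly supported function is a Schwartz map. -/
noncomputable def mySchwartz (f : ℝ → ℂ) (hsm : ContDiff ℝ ((⊤ : ℕ∞) : WithTop ℕ∞) f)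
    (hc : HasCompactSupport f) : SchwartzMap ℝ ℂ where
  toFun := f
  smooth' := hsm
  decay' := by
    intro k n
    have hcont : Continuous fun x : ℝ => ‖x‖ ^ k * ‖iteratedFDeriv ℝ n f x‖ :=
      ((continuous_norm.comp continuous_id).pow k).mul
        (hsm.continuous_iteratedFDeriv (by exact_mod_cast le_top)).norm
    have hsupp : HasCompactSupport fun x : ℝ => ‖x‖ ^ k * ‖iteratedFDeriv ℝ n f x‖ := by
      apply HasCompactSupport.mul_left
      exact (hc.iteratedFDeriv n).norm
    obtain ⟨C, hC⟩ := hcont.bounded_above_of_compact_support hsupp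
    exact ⟨C, fun x => (le_abs_self _).trans ((Real.norm_eq_abs _ ▸ hC x))⟩

/-- The Fourier transform `f̂(λ) = ∫ e^{i t λ} f(t) dt`. -/
noncomputable def fourierHat (f : ℝ → ℂ) (lam : ℝ) : ℂ :=
  ∫ t : ℝ, Complex.exp (Complex.I * t * lam) * f t

set_option maxHeartbeats 1000000 in
theorem exists_fourier_bump (I : Set ℝ) (hIclosed : IsClosed I) (hIinterval : I.OrdConnected)
    (s : ℝ) (hs : s ∈ interior I) :
    ∃ f : ℝ → ℂ, Integrable f ∧ (∫ t : ℝ, ‖f t‖) = 1 ∧ fourierHat f s = 1 ∧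
      Function.support (fourierHat f) ⊆ I := by
  classical
  have hcast : ∀ x : ℝ, 0 ≤ x → ‖(x : ℂ)‖ = x := fun x hx => by
    rw [Complex.norm_real, Real.norm_eq_abs, _root_.abs_of_nonneg hx]
  obtain ⟨ε, hε, hball⟩ : ∃ ε > 0, Metric.ball s ε ⊆ I := by
    obtain ⟨ε, hε, h⟩ := Metric.isOpen_iff.mp isOpen_interior s hs
    exact ⟨ε, hε, h.trans interior_subset⟩
  have hπ : (0:ℝ) < π := Real.pi_pos
  have hπ' : (π:ℝ) ≠ 0 := ne_of_gt hπ
  set r : ℝ := ε / (8 * π) with hr_def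
  have hr : 0 < r := by positivity
  set b : ContDiffBump (0:ℝ) := ⟨r/2, r, by positivity, by linarith⟩ with hb
  set Ψ : ℝ → ℂ := fun x => ((b x : ℝ) : ℂ) with hΨ
  have hΨcd : ContDiff ℝ ((⊤ : ℕ∞) : WithTop ℕ∞) Ψ :=
    Complex.ofRealCLM.contDiff.comp b.contDiff
  have hΨcs : HasCompactSupport Ψ :=
    b.hasCompactSupport.comp_left (g := fun x : ℝ => (x:ℂ)) Complex.ofReal_zero
  set ΨS : SchwartzMap ℝ ℂ := mySchwartz Ψ hΨcd hΨcs with hΨS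
  have hΨScoe : ⇑ΨS = Ψ := rfl
  set g : ℝ → ℂ := 𝓕 Ψ with hg
  have hgS : ⇑(SchwartzMap.fourierTransformCLE ℂ (SchwartzMap ℝ ℂ) ΨS) = g := by
    rfl
  have hgcont : Continuous g := by
    rw [← hgS]; exact (SchwartzMap.fourierTransformCLE ℂ (SchwartzMap ℝ ℂ) ΨS).continuous
  have hgint : Integrable g := by
    rw [← hgS]; exact (SchwartzMap.fourierTransformCLE ℂ (SchwartzMap ℝ ℂ) ΨS).integrable
  have hginvint : Integrable (𝓕⁻ Ψ) := by
    have h1 := (𝓕⁻ ΨS).integrable (μ := volume)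
    rwa [SchwartzMap.fourierInv_coe, hΨScoe] at h1
  -- conjugation symmetry
  have hgneg : ∀ t : ℝ, g (-t) = (starRingEnd ℂ) (g t) := by
    intro t
    rw [hg, Real.fourier_real_eq_integral_exp_smul,
      Real.fourier_real_eq_integral_exp_smul, ← integral_conj]
    congr 1
    ext v
    rw [smul_eq_mul, smul_eq_mul, map_mul, ← Complex.exp_conj, map_mul, Complex.conj_ofReal,
      Complex.conj_I, hΨ, Complex.conj_ofReal]
    congr 2
    push_cast
    ring
  -- bound
  obtain ⟨M, hM⟩ : ∃ M : ℝ, ∀ t : ℝ, ‖g t‖ ≤ M := by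
    refine ⟨‖(SchwartzMap.fourierTransformCLE ℂ (SchwartzMap ℝ ℂ) ΨS).toBoundedContinuousFunction‖, fun t => ?_⟩
    have h1 := (SchwartzMap.fourierTransformCLE ℂ (SchwartzMap ℝ ℂ) ΨS).toBoundedContinuousFunction.norm_coe_le_norm t
    simpa [hgS] using h1
  have hgnegint : Integrable (fun t : ℝ => g (-t)) := hgint.comp_neg
  have hh : Integrable (fun t : ℝ => g t * g (-t)) :=
    hgnegint.bdd_mul hgcont.aestronglyMeasurable (Filter.Eventually.of_forall fun t => hM t)
  have hnorm_h : ∀ t : ℝ, g t * g (-t) = ((‖g t‖ ^ 2 : ℝ) : ℂ) := by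
    intro t
    rw [hgneg t, Complex.mul_conj']
    push_cast
    ring
  set V : ℝ := ∫ t : ℝ, ‖g t‖ ^ 2 with hV
  have hVint : Integrable (fun t : ℝ => ‖g t‖ ^ 2) := by
    refine hh.norm.congr (Filter.Eventually.of_forall fun t => ?_)
    show ‖g t * g (-t)‖ = ‖g t‖ ^ 2
    rw [hnorm_h t, hcast _ (sq_nonneg _)]
  have hg0 : 0 < ‖g 0‖ ^ 2 := by
    have hgz : g 0 = ((∫ x : ℝ, b x : ℝ) : ℂ) := by
      rw [hg, Real.fourier_real_eq_integral_exp_smul]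
      simp only [mul_zero, Complex.ofReal_zero, zero_mul, Complex.exp_zero, one_smul, hΨ]
      exact integral_ofReal
    have hpos := b.integral_pos (μ := volume)
    rw [hgz, hcast _ hpos.le]
    positivity
  have hVpos : 0 < V := by
    rw [hV]
    refine (integral_pos_iff_support_of_nonneg (fun t => by positivity) hVint).mpr ?_
    have hcont2 : Continuous fun t : ℝ => ‖g t‖ ^ 2 := (hgcont.norm).pow 2
    have hev : ∀ᶠ t in nhds (0:ℝ), 0 < ‖g t‖ ^ 2 :=
      (hcont2.continuousAt (x := 0)).eventually (eventually_gt_nhds hg0)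
    obtain ⟨η, hη, hηsub⟩ := Metric.eventually_nhds_iff.mp hev
    have hsub : Metric.ball (0:ℝ) η ⊆ Function.support fun t : ℝ => ‖g t‖ ^ 2 := by
      intro t ht
      exact ne_of_gt (hηsub (by simpa [Real.dist_eq] using ht))
    exact lt_of_lt_of_le (Metric.measure_ball_pos volume 0 hη) (measure_mono hsub)
  -- the function
  set F : ℝ → ℂ := fun t : ℝ =>
    ((V⁻¹ : ℝ) : ℂ) * Complex.exp (-(Complex.I * t * s)) * (g t * g (-t)) with hF
  have hexp1 : ∀ t : ℝ, ‖Complex.exp (-(Complex.I * (t:ℂ) * (s:ℂ)))‖ = 1 := by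
    intro t
    have hre : (-(Complex.I * (t:ℂ) * (s:ℂ))).re = 0 := by simp
    rw [Complex.norm_exp, hre, Real.exp_zero]
  have hFint : Integrable F := by
    have h1 : Integrable (fun t : ℝ =>
        (((V⁻¹ : ℝ) : ℂ) * Complex.exp (-(Complex.I * t * s))) * (g t * g (-t))) := by
      refine Integrable.bdd_mul
        (f := fun t : ℝ => ((V⁻¹ : ℝ) : ℂ) * Complex.exp (-(Complex.I * t * s))) (c := V⁻¹) hh ?_
        (Filter.Eventually.of_forall fun t => ?_)
      · have hc2 : Continuous fun t : ℝ => -(Complex.I * (t:ℂ) * (s:ℂ)) :=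
          ((continuous_const.mul Complex.continuous_ofReal).mul continuous_const).neg
        exact (continuous_const.mul (Complex.continuous_exp.comp hc2)).aestronglyMeasurable
      · rw [norm_mul, hcast _ (inv_nonneg.mpr hVpos.le), hexp1 t, mul_one]
    refine h1.congr (Filter.Eventually.of_forall fun t => ?_)
    show _ = F t
    rw [hF]
  have hFnorm : ∀ t : ℝ, ‖F t‖ = V⁻¹ * ‖g t‖ ^ 2 := by
    intro t
    calc ‖F t‖ = ‖((V⁻¹ : ℝ) : ℂ)‖ * ‖Complex.exp (-(Complex.I * t * s))‖ * ‖g t * g (-t)‖ := by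
          rw [hF]
          show ‖_ * _ * _‖ = _
          rw [norm_mul, norm_mul]
      _ = V⁻¹ * ‖g t‖ ^ 2 := by
          rw [hexp1 t, mul_one, hnorm_h t, hcast _ (sq_nonneg _), hcast _ (inv_nonneg.mpr hVpos.le)]
  have hint_norm : (∫ t : ℝ, ‖F t‖) = 1 := by
    rw [show (fun t : ℝ => ‖F t‖) = fun t : ℝ => V⁻¹ * ‖g t‖ ^ 2 from funext hFnorm,
      integral_const_mul]
    exact inv_mul_cancel₀ (ne_of_gt hVpos)
  -- the key computation
  have key : ∀ μ : ℝ, (∫ t : ℝ, Complex.exp (Complex.I * t * μ) * (g t * g (-t)))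
      = ∫ ξ : ℝ, Ψ (ξ - μ / (2 * π)) * Ψ ξ := by
    intro μ
    set a : ℝ := μ / (2 * π) with ha
    set Ψτ : ℝ → ℂ := fun ξ => Ψ (ξ - a) with hΨτ
    have hΨint : Integrable Ψ := by rw [← hΨScoe]; exact ΨS.integrable
    have hΨτint : Integrable Ψτ := hΨint.comp_sub_right a
    have e1 : ∀ t : ℝ, 𝓕 Ψτ (-t) = Complex.exp (Complex.I * t * μ) * g (-t) := by
      intro t
      rw [hg, Real.fourier_real_eq_integral_exp_smul,
        Real.fourier_real_eq_integral_exp_smul]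
      simp only [smul_eq_mul]
      calc (∫ ξ : ℝ, Complex.exp ((-2 * π * ξ * (-t) : ℝ) * Complex.I) * Ψτ ξ)
          = ∫ ξ : ℝ, (fun y : ℝ =>
              Complex.exp ((-2 * π * (y + a) * (-t) : ℝ) * Complex.I) * Ψ y) (ξ - a) := by
            congr 1
            ext ξ
            rw [hΨτ]
            norm_num
        _ = ∫ y : ℝ, Complex.exp ((-2 * π * (y + a) * (-t) : ℝ) * Complex.I) * Ψ y :=
            integral_sub_right_eq_self
              (fun y : ℝ => Complex.exp ((-2 * π * (y + a) * (-t) : ℝ) * Complex.I) * Ψ y) a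
        _ = ∫ y : ℝ, Complex.exp (Complex.I * t * μ) *
              (Complex.exp ((-2 * π * y * (-t) : ℝ) * Complex.I) * Ψ y) := by
            congr 1
            ext y
            rw [← mul_assoc, ← Complex.exp_add]
            congr 2
            have hre : (-2 * π * (y + a) * (-t) : ℝ) = t * μ + -2 * π * y * (-t) := by
              rw [ha]
              field_simp
              ring
            rw [hre]
            push_cast
            ring
        _ = Complex.exp (Complex.I * t * μ) *
              ∫ y : ℝ, Complex.exp ((-2 * π * y * (-t) : ℝ) * Complex.I) * Ψ y :=
            integral_const_mul _ _
    have e2 : ∀ t : ℝ, g t = (𝓕⁻ Ψ) (-t) := by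
      intro t
      rw [Real.fourierInv_eq_fourier_neg, neg_neg, hg]
    have hLflip : (innerₗ ℝ).flip = innerₗ ℝ := by
      apply LinearMap.ext
      intro x
      apply LinearMap.ext
      intro y
      simp [real_inner_comm]
    have hLcont : Continuous fun p : ℝ × ℝ => (innerₗ ℝ) p.1 p.2 := by
      simpa using (continuous_inner : Continuous fun p : ℝ × ℝ => (inner ℝ p.1 p.2 : ℝ))
    have flip := VectorFourier.integral_fourierIntegral_smul_eq_flip
      (e := Real.fourierChar) (L := innerₗ ℝ) (μ := volume) (ν := volume)
      Real.continuous_fourierChar hLcont hΨτint hginvint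
    rw [hLflip] at flip
    have flip2 : (∫ u : ℝ, 𝓕 Ψτ u • (𝓕⁻ Ψ) u) = ∫ ξ : ℝ, Ψτ ξ • 𝓕 (𝓕⁻ Ψ) ξ := flip
    have hinv : 𝓕 (𝓕⁻ Ψ) = Ψ :=
      hΨcd.continuous.fourier_fourierInv_eq hΨint (by rw [← hg]; exact hgint)
    calc (∫ t : ℝ, Complex.exp (Complex.I * t * μ) * (g t * g (-t)))
        = ∫ t : ℝ, (fun u : ℝ => 𝓕 Ψτ u • (𝓕⁻ Ψ) u) (-t) := by
          congr 1
          ext t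
          simp only [smul_eq_mul]
          rw [e1 t, ← e2 t]
          ring
      _ = ∫ u : ℝ, 𝓕 Ψτ u • (𝓕⁻ Ψ) u := integral_neg_eq_self (fun u : ℝ => 𝓕 Ψτ u • (𝓕⁻ Ψ) u) volume
      _ = ∫ ξ : ℝ, Ψτ ξ • 𝓕 (𝓕⁻ Ψ) ξ := flip2
      _ = ∫ ξ : ℝ, Ψ (ξ - a) * Ψ ξ := by
          rw [hinv]
          simp only [smul_eq_mul, hΨτ]
  -- fourierHat of F
  have hFhat : ∀ lam : ℝ, fourierHat F lam
      = ((V⁻¹ : ℝ) : ℂ) * ∫ t : ℝ, Complex.exp (Complex.I * t * (lam - s)) * (g t * g (-t)) := by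
    intro lam
    rw [fourierHat, ← integral_const_mul]
    congr 1
    ext t
    have hexp : Complex.exp (Complex.I * t * lam) * Complex.exp (-(Complex.I * t * s))
        = Complex.exp (Complex.I * t * (lam - s)) := by
      rw [← Complex.exp_add]
      congr 1
      push_cast
      ring
    calc Complex.exp (Complex.I * t * lam) * F t
        = ((V⁻¹ : ℝ) : ℂ) * ((Complex.exp (Complex.I * t * lam) *
            Complex.exp (-(Complex.I * t * s))) * (g t * g (-t))) := by
          rw [hF]
          show Complex.exp (Complex.I * t * lam) * (_ * _ * _) = _
          ring
      _ = ((V⁻¹ : ℝ) : ℂ) * (Complex.exp (Complex.I * t * (lam - s)) * (g t * g (-t))) := by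
          rw [hexp]
  -- value at s
  have hhat_s : fourierHat F s = 1 := by
    rw [hFhat s, sub_self]
    have hval : (∫ t : ℝ, Complex.exp (Complex.I * t * (0:ℂ)) * (g t * g (-t))) = ((V:ℝ) : ℂ) := by
      calc (∫ t : ℝ, Complex.exp (Complex.I * t * (0:ℂ)) * (g t * g (-t)))
          = ∫ t : ℝ, ((‖g t‖ ^ 2 : ℝ) : ℂ) := by
            congr 1
            ext t
            rw [mul_zero, Complex.exp_zero, one_mul, hnorm_h t]
        _ = ((V:ℝ) : ℂ) := integral_ofReal
    rw [hval, ← Complex.ofReal_mul, inv_mul_cancel₀ (ne_of_gt hVpos), Complex.ofReal_one]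
  -- support
  have hsupp : Function.support (fourierHat F) ⊆ I := by
    intro lam hlam
    by_contra hnotin
    apply hlam
    have hdist : ε ≤ |lam - s| := by
      by_contra hlt
      push_neg at hlt
      exact hnotin (hball (by simpa [Real.dist_eq] using hlt))
    rw [hFhat lam, show ((lam:ℂ) - (s:ℂ)) = ((lam - s : ℝ) : ℂ) by push_cast; ring,
      key (lam - s)]
    have hzero : ∀ ξ : ℝ, Ψ (ξ - (lam - s) / (2 * π)) * Ψ ξ = 0 := by
      intro ξ
      set a : ℝ := (lam - s) / (2 * π) with ha
      by_contra hne
      have h1 : Ψ (ξ - a) ≠ 0 := fun h => hne (by rw [h, zero_mul])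
      have h2 : Ψ ξ ≠ 0 := fun h => hne (by rw [h, mul_zero])
      have hb1 : b (ξ - a) ≠ 0 := by
        intro h
        apply h1
        rw [hΨ]
        norm_num [h]
      have hb2 : b ξ ≠ 0 := by
        intro h
        apply h2
        rw [hΨ]
        norm_num [h]
      have hm1 : |ξ - a| < r := by
        have hmem := Function.mem_support.mpr hb1
        rw [b.support_eq] at hmem
        simpa [Real.dist_eq] using hmem
      have hm2 : |ξ| < r := by
        have hmem := Function.mem_support.mpr hb2
        rw [b.support_eq] at hmem
        simpa [Real.dist_eq] using hmem
      have hA : |a| < 2 * r := by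
        have htri : |a| ≤ |ξ| + |ξ - a| := by
          have h3 := abs_sub ξ (ξ - a)
          simpa [sub_sub_cancel] using h3
        linarith
      have hA2 : 4 * r ≤ |a| := by
        rw [ha, abs_div, abs_of_pos (by positivity : (0:ℝ) < 2 * π), le_div_iff₀ (by positivity)]
        calc 4 * r * (2 * π) = 8 * π * r := by ring
          _ = ε := by rw [hr_def]; field_simp
          _ ≤ |lam - s| := hdist
      linarith
    rw [show (fun ξ : ℝ => Ψ (ξ - (lam - s) / (2 * π)) * Ψ ξ) = fun _ : ℝ => (0:ℂ) from
      funext hzero]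
    simp
  exact ⟨F, hFint, hint_norm, hhat_s, hsupp⟩
end
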